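/- arXiv:2209.15636 — 2 statements merged into one kernel-verified Lean document; each statement's English description precedes it below -/
import Mathlib

section
/- The function φ(ξ) = φ_r − (φ_r − φ₁)·tanh²((1/2)·√((φ_r−φ₁)/(3c))·ξ) satisfies the ODE (φ′)² = (1/(3c))·(φ_r − φ)·(φ − φ₁)² for all ξ ∈ ℝ. -/
/-!
With `A = φr - φ₁`, `t = tanh (a ξ)` and `4 a² = A / (3c)`, one has `φr - φ = A t²`,
`φ - φ₁ = A (1 - t²)` and, since `tanh' = 1 - tanh²`, `φ' = -2 a A t (1 - t²)`;
squaring gives the ODE.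
-/

open Real

theorem Real.hasDerivAt_tanh (x : ℝ) : HasDerivAt tanh (1 - tanh x ^ 2) x := by
  have hcosh : cosh x ≠ 0 := (cosh_pos x).ne'
  have h := (hasDerivAt_sinh x).div (hasDerivAt_cosh x) hcosh
  rw [show sinh / cosh = tanh from funext fun y => (tanh_eq_sinh_div_cosh y).symm] at h
  refine h.congr_deriv ?_
  rw [tanh_eq_sinh_div_cosh]
  field_simp

theorem hasDerivAt_sub_mul_tanh_sq (r A a ξ : ℝ) :
    HasDerivAt (fun ξ => r - A * tanh (a * ξ) ^ 2)
      (-(2 * a * A * tanh (a * ξ) * (1 - tanh (a * ξ) ^ 2))) ξ := by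
  have hlin : HasDerivAt (fun ξ => a * ξ) a ξ := by simpa using (hasDerivAt_id ξ).const_mul a
  refine ((((hasDerivAt_tanh (a * ξ)).comp ξ hlin).pow 2).const_mul A).const_sub r |>.congr_deriv ?_
  simp only [Function.comp_apply]
  ring

/-- For `κ < 0` the junk value `√κ = 0` makes the tanh factor `tanh 0 = 0`. -/
theorem sq_sqrt_mul_tanh_sq (κ ξ : ℝ) :
    sqrt κ ^ 2 * tanh (1 / 2 * sqrt κ * ξ) ^ 2 = κ * tanh (1 / 2 * sqrt κ * ξ) ^ 2 := by
  rcases le_or_gt 0 κ with hκ | hκ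
  · rw [sq_sqrt hκ]
  · simp [sqrt_eq_zero'.mpr hκ.le]

theorem deriv_sub_mul_tanh_sq_sq (r A κ ξ : ℝ) :
    let t := tanh (1 / 2 * sqrt κ * ξ)
    deriv (fun ξ => r - A * tanh (1 / 2 * sqrt κ * ξ) ^ 2) ξ ^ 2
      = κ * (A * t * (1 - t ^ 2)) ^ 2 := by
  intro t
  rw [(hasDerivAt_sub_mul_tanh_sq r A _ ξ).deriv]
  linear_combination (A * (1 - t ^ 2)) ^ 2 * sq_sqrt_mul_tanh_sq κ ξ

theorem solitary_profile_ode_general (c φ₁ φr : ℝ) :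
    let φ : ℝ → ℝ := fun ξ =>
      φr - (φr - φ₁) * Real.tanh ((1 / 2) * Real.sqrt ((φr - φ₁) / (3 * c)) * ξ) ^ 2
    ∀ ξ : ℝ, (deriv φ ξ) ^ 2 = (1 / (3 * c)) * (φr - φ ξ) * (φ ξ - φ₁) ^ 2 := by
  intro φ ξ
  rw [deriv_sub_mul_tanh_sq_sq]
  simp only [φ]
  ring

theorem solitary_profile_ode (c φ₁ φr : ℝ) (hc : 0 < c) (hlt : φ₁ < φr) :
    let φ : ℝ → ℝ := fun ξ =>
      φr - (φr - φ₁) * Real.tanh ((1 / 2) * Real.sqrt ((φr - φ₁) / (3 * c)) * ξ) ^ 2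
    ∀ ξ : ℝ, (deriv φ ξ) ^ 2 = (1 / (3 * c)) * (φr - φ ξ) * (φ ξ - φ₁) ^ 2 :=
  solitary_profile_ode_general c φ₁ φr
end

section
/- The function u(x,t) = φ_r − (φ_r − φ₁)·tanh²((1/2)√((φ_r−φ₁)/(3c))·(x − ct)), with Δ = (c−1)²+2g > 0, φ₁ = c−1−√Δ, φ_r = c−1+2√Δ, is a classical solution of the RLW equation u_t + u_x + u·u_x − u_{xxt} = 0. -/
/-!
The wave is a travelling wave `u = f (x - c t)`, which turns the RLW equation into the ODE
`(1 - c) f' + f f' + c f''' = 0` for the profile. For `f = P - A T²` with `T = tanh (k ξ)` one has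
`T' = k (1 - T²)`, so every derivative of `f` is a polynomial in `T`, and the ODE becomes
`f' · ((1 - c + P - 8 c k²) + (12 c k² - A) T²) = 0`. It therefore holds when `A = 12 c k²` and
`P = c - 1 + 8 c k²`, which is the case for `A = φr - φ₁ = 3 √Δ`, `k² = √Δ / (4 c)`, `P = φr`.
-/

open Real

section TravelingWave

variable {f f' : ℝ → ℝ} (c : ℝ)

theorem deriv_travelingWave_space (hf : ∀ ξ, HasDerivAt f (f' ξ) ξ) (t : ℝ) :
    deriv (fun x => f (x - c * t)) = fun x => f' (x - c * t) :=
  funext fun x => ((hf _).comp x ((hasDerivAt_id x).sub_const (c * t))).deriv.trans (mul_one _)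

theorem deriv_travelingWave_time (hf : ∀ ξ, HasDerivAt f (f' ξ) ξ) (x : ℝ) :
    deriv (fun t => f (x - c * t)) = fun t => -c * f' (x - c * t) := by
  funext t
  have hξ : HasDerivAt (fun t => x - c * t) (-c) t := by
    simpa using ((hasDerivAt_id t).const_mul c).const_sub x
  exact ((hf _).comp t hξ).deriv.trans (mul_comm _ _)

theorem travelingWave_solves_RLW {f₁ f₂ f₃ : ℝ → ℝ} (hf : ∀ ξ, HasDerivAt f (f₁ ξ) ξ)
    (hf₁ : ∀ ξ, HasDerivAt f₁ (f₂ ξ) ξ) (hf₂ : ∀ ξ, HasDerivAt f₂ (f₃ ξ) ξ)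
    (hode : ∀ ξ, (1 - c) * f₁ ξ + f ξ * f₁ ξ + c * f₃ ξ = 0) (x t : ℝ) :
    deriv (fun t' => f (x - c * t')) t + deriv (fun x' => f (x' - c * t)) x
      + f (x - c * t) * deriv (fun x' => f (x' - c * t)) x
      - deriv (fun t' => deriv (fun x' => deriv (fun x'' => f (x'' - c * t')) x') x) t = 0 := by
  simp only [deriv_travelingWave_space c hf, deriv_travelingWave_space c hf₁,
    deriv_travelingWave_time c hf, deriv_travelingWave_time c hf₂]
  linear_combination hode (x - c * t)

end TravelingWave

section SolitaryProfile

variable (k : ℝ)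

theorem hasDerivAt_tanh_mul (ξ : ℝ) :
    HasDerivAt (fun ξ => tanh (k * ξ)) (k * (1 - tanh (k * ξ) ^ 2)) ξ := by
  have hkξ : HasDerivAt (fun ξ => k * ξ) k ξ := by simpa using (hasDerivAt_id ξ).const_mul k
  exact ((hasDerivAt_tanh (k * ξ)).comp ξ hkξ).congr_deriv (mul_comm _ _)

theorem hasDerivAt_sub_mul_tanh_mul_sq (A P ξ : ℝ) :
    HasDerivAt (fun ξ => P - A * tanh (k * ξ) ^ 2)
      (-2 * A * k * (tanh (k * ξ) * (1 - tanh (k * ξ) ^ 2))) ξ := by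
  refine ((((hasDerivAt_tanh_mul k ξ).pow 2).const_mul A).const_sub P).congr_deriv ?_
  ring

theorem hasDerivAt_mul_tanh_mul_one_sub_sq (B ξ : ℝ) :
    HasDerivAt (fun ξ => B * (tanh (k * ξ) * (1 - tanh (k * ξ) ^ 2)))
      (B * k * ((1 - tanh (k * ξ) ^ 2) * (1 - 3 * tanh (k * ξ) ^ 2))) ξ := by
  have hT := hasDerivAt_tanh_mul k ξ
  refine ((hT.mul ((hT.pow 2).const_sub 1)).const_mul B).congr_deriv ?_
  simp only [Pi.pow_apply]
  ring

theorem hasDerivAt_mul_one_sub_tanh_mul_sq_mul (B ξ : ℝ) :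
    HasDerivAt (fun ξ => B * ((1 - tanh (k * ξ) ^ 2) * (1 - 3 * tanh (k * ξ) ^ 2)))
      (-4 * B * k * (tanh (k * ξ) * (1 - tanh (k * ξ) ^ 2) * (2 - 3 * tanh (k * ξ) ^ 2))) ξ := by
  have hT := hasDerivAt_tanh_mul k ξ
  refine ((((hT.pow 2).const_sub 1).mul (((hT.pow 2).const_mul 3).const_sub 1)).const_mul
    B).congr_deriv ?_
  simp only [Pi.pow_apply]
  ring

end SolitaryProfile

theorem solitaryProfile_solves_RLW {c k A P : ℝ} (hA : A = 12 * c * k ^ 2)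
    (hP : P = c - 1 + 8 * c * k ^ 2) (x t : ℝ) :
    let f : ℝ → ℝ := fun ξ => P - A * tanh (k * ξ) ^ 2
    deriv (fun t' => f (x - c * t')) t + deriv (fun x' => f (x' - c * t)) x
      + f (x - c * t) * deriv (fun x' => f (x' - c * t)) x
      - deriv (fun t' => deriv (fun x' => deriv (fun x'' => f (x'' - c * t')) x') x) t = 0 := by
  refine travelingWave_solves_RLW c (hasDerivAt_sub_mul_tanh_mul_sq k A P)
    (hasDerivAt_mul_tanh_mul_one_sub_sq k _) (hasDerivAt_mul_one_sub_tanh_mul_sq_mul k _)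
    (fun ξ => ?_) x t
  subst hA hP
  ring

theorem solitary_wave_solves_RLW_general (c g : ℝ) (hc : 0 < c) :
    let Δ : ℝ := (c - 1) ^ 2 + 2 * g
    let φ₁ : ℝ := c - 1 - Real.sqrt Δ
    let φr : ℝ := c - 1 + 2 * Real.sqrt Δ
    let u : ℝ → ℝ → ℝ := fun x t =>
      φr - (φr - φ₁) * Real.tanh ((1 / 2) * Real.sqrt ((φr - φ₁) / (3 * c)) * (x - c * t)) ^ 2
    let ux : ℝ → ℝ → ℝ := fun x t => deriv (fun x' => u x' t) x
    let uxx : ℝ → ℝ → ℝ := fun x t => deriv (fun x' => ux x' t) x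
    let ut : ℝ → ℝ → ℝ := fun x t => deriv (fun t' => u x t') t
    let uxxt : ℝ → ℝ → ℝ := fun x t => deriv (fun t' => uxx x t') t
    ∀ x t : ℝ, ut x t + ux x t + u x t * ux x t - uxxt x t = 0 := by
  intro Δ φ₁ φr u ux uxx ut uxxt x t
  have hamplitude : φr - φ₁ = 3 * √Δ := by ring
  have hk : (1 / 2 * √((φr - φ₁) / (3 * c))) ^ 2 = √Δ / (4 * c) := by
    rw [hamplitude, mul_pow, sq_sqrt (by positivity)]
    field_simp
    ring
  refine solitaryProfile_solves_RLW (c := c) ?_ ?_ x t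
  · rw [hk, hamplitude]
    field_simp
    ring
  · rw [hk]
    field_simp
    ring

theorem solitary_wave_solves_RLW (c g : ℝ) (hc : 0 < c)
    (hΔ : 0 < (c - 1) ^ 2 + 2 * g) :
    let Δ : ℝ := (c - 1) ^ 2 + 2 * g
    let φ₁ : ℝ := c - 1 - Real.sqrt Δ
    let φr : ℝ := c - 1 + 2 * Real.sqrt Δ
    let u : ℝ → ℝ → ℝ := fun x t =>
      φr - (φr - φ₁) * Real.tanh ((1 / 2) * Real.sqrt ((φr - φ₁) / (3 * c)) * (x - c * t)) ^ 2
    let ux : ℝ → ℝ → ℝ := fun x t => deriv (fun x' => u x' t) x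
    let uxx : ℝ → ℝ → ℝ := fun x t => deriv (fun x' => ux x' t) x
    let ut : ℝ → ℝ → ℝ := fun x t => deriv (fun t' => u x t') t
    let uxxt : ℝ → ℝ → ℝ := fun x t => deriv (fun t' => uxx x t') t
    ∀ x t : ℝ, ut x t + ux x t + u x t * ux x t - uxxt x t = 0 :=
  solitary_wave_solves_RLW_general c g hc
end
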